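/- Let H(s) = C(sI − A)^{-1}B + D with A Hurwitz, and let P and S_ω[A] be the frequency-limited controllability gramian and the associated matrix-log term over [0, Ω]. Then (1/2π) trace(∫_{−Ω}^{Ω} H(jν) H^*(jν) dν) = trace(C P C^T + 2 (C S_ω[A] B + D·(Ω/2π)) D^T). -/

import Mathlib

open Matrix

/-- The principal matrix logarithm, expressed via its standard integral representation. -/
noncomputable def matLog {n : ℕ} (N : Matrix (Fin n) (Fin n) ℂ) : Matrix (Fin n) (Fin n) ℂ :=
  Matrix.of fun i k =>
    ∫ s in (0:ℝ)..1, ((N - 1) * ((s : ℂ) • (N - 1) + 1)⁻¹) i k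

/-- The resolventIm `(jν I - A)⁻¹` of a real matrix, as a complex matrix. -/
noncomputable def resolventIm {n : ℕ} (A : Matrix (Fin n) (Fin n) ℝ) (ν : ℝ) :
    Matrix (Fin n) (Fin n) ℂ :=
  (((ν : ℂ) * Complex.I) • (1 : Matrix (Fin n) (Fin n) ℂ) - A.map Complex.ofReal)⁻¹

/-- The frequency-limited controllability gramian (entrywise integral). -/
noncomputable def flGram {n m : ℕ} (A : Matrix (Fin n) (Fin n) ℝ)
    (B : Matrix (Fin n) (Fin m) ℝ) (Ω : ℝ) : Matrix (Fin n) (Fin n) ℂ :=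
  Matrix.of fun i k =>
    ((1 / (2 * Real.pi) : ℝ) : ℂ) *
      ∫ ν in (-Ω)..Ω,
        (resolventIm A ν * B.map Complex.ofReal * (B.map Complex.ofReal)ᴴ *
          (resolventIm A ν)ᴴ) i k

/-- `S_ω[A] = Real[(j/2π) ln((A + jΩI)(A − jΩI)⁻¹)]`, a real matrix. -/
noncomputable def SomegaRe {n : ℕ} (A : Matrix (Fin n) (Fin n) ℝ) (Ω : ℝ) :
    Matrix (Fin n) (Fin n) ℝ :=
  (((Complex.I / ((2 * Real.pi : ℝ) : ℂ)) •
    matLog ((A.map Complex.ofReal + ((Ω : ℂ) * Complex.I) • (1 : Matrix (Fin n) (Fin n) ℂ)) *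
      (A.map Complex.ofReal -
        ((Ω : ℂ) * Complex.I) • (1 : Matrix (Fin n) (Fin n) ℂ))⁻¹))).map Complex.re

/-- The transfer function `H(jν) = C (jνI − A)⁻¹ B + D` on the imaginary axis. -/
noncomputable def tfEval {n m p : ℕ} (A : Matrix (Fin n) (Fin n) ℝ)
    (B : Matrix (Fin n) (Fin m) ℝ) (C : Matrix (Fin p) (Fin n) ℝ)
    (D : Matrix (Fin p) (Fin m) ℝ) (ν : ℝ) : Matrix (Fin p) (Fin m) ℂ :=
  C.map Complex.ofReal * resolventIm A ν * B.map Complex.ofReal + D.map Complex.ofReal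


/-!
Write `R(ν) = (jνI − A)⁻¹`, so that `H(jν) = C R(ν) B + D`. Expanding `trace (H Hᴴ)`, the
quadratic term integrates to `2π · trace (C P Cᵀ)`, the constant term to `2Ω · trace (D Dᵀ)`, and
the two cross terms are complex conjugates of each other, with integral `trace (C K B Dᵀ)` for
`K = ∫_{−Ω}^{Ω} R(ν) dν`. Since `R(−ν)` is the entrywise conjugate of `R(ν)`, `K` is real, so the
cross terms contribute `2 · trace (C K B Dᵀ)`. Finally `K = 2π S_ω[A]`: with
`N = (A + jΩ)(A − jΩ)⁻¹` the integrand `(N − 1)(s(N − 1) + 1)⁻¹` of the logarithm is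
`−2jΩ R(Ω(1 − 2s))`, and the substitution `ν = Ω(1 − 2s)` gives `ln N = −j K`.
-/

open Complex ComplexConjugate MeasureTheory

namespace Matrix

variable {l m n α : Type*}

theorem inv_neg [Fintype n] [DecidableEq n] [CommRing α] (X : Matrix n n α) :
    (-X)⁻¹ = -X⁻¹ := by
  have h : (-1 : Matrix n n α)⁻¹ = -1 := inv_eq_left_inv (by simp)
  rw [← neg_one_mul, mul_inv_rev, h, mul_neg_one]

theorem isUnit_det_smul_one_sub_of_notMem_spectrum [Fintype n] [DecidableEq n] [Field α]
    {M : Matrix n n α} {z : α} (hz : z ∉ spectrum α M) : IsUnit (z • (1 : Matrix n n α) - M).det :=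
  (isUnit_iff_isUnit_det _).1 <| by
    rwa [spectrum.notMem_iff, Algebra.algebraMap_eq_smul_one] at hz

/-- With `N = (M + c)(M - c)⁻¹`, the integrand of the integral representation of `log N` is a
resolvent of `M`. -/
theorem cayley_sub_one_mul_inv [Fintype n] [DecidableEq n] [Field α]
    (M : Matrix n n α) (c s : α) (hM : IsUnit (M - c • 1).det) :
    ((M + c • 1) * (M - c • 1)⁻¹ - 1) * (s • ((M + c • 1) * (M - c • 1)⁻¹ - 1) + 1)⁻¹ =
      (-(2 * c)) • (((1 - 2 * s) * c) • 1 - M)⁻¹ := by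
  set P := M - c • 1
  have hPP : P * P⁻¹ = 1 := mul_nonsing_inv _ hM
  have hsub : (M + c • 1) * P⁻¹ - 1 = (2 * c) • P⁻¹ := by
    have h2c : M + c • 1 - P = (2 * c) • (1 : Matrix n n α) := by simp only [P]; module
    calc (M + c • 1) * P⁻¹ - 1 = (M + c • 1 - P) * P⁻¹ := by rw [Matrix.sub_mul, hPP]
      _ = (2 * c) • P⁻¹ := by rw [h2c, Matrix.smul_mul, Matrix.one_mul]
  have hadd : s • ((2 * c) • P⁻¹) + 1 = -(((1 - 2 * s) * c) • 1 - M) * P⁻¹ := by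
    have hY : -(((1 - 2 * s) * c) • 1 - M) = P + (s * (2 * c)) • (1 : Matrix n n α) := by
      simp only [P]; module
    rw [hY, Matrix.add_mul, hPP, Matrix.smul_mul, Matrix.one_mul, smul_smul, add_comm]
  rw [hsub, hadd, mul_inv_rev, nonsing_inv_nonsing_inv _ hM, inv_neg, Matrix.smul_mul,
    ← Matrix.mul_assoc, nonsing_inv_mul _ hM, Matrix.one_mul, smul_neg, neg_smul]

theorem trace_add_mul_conjTranspose_add [Fintype m] [Fintype n] [NonUnitalSemiring α]
    [StarRing α] (X Y : Matrix m n α) :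
    trace ((X + Y) * (X + Y)ᴴ) =
      trace (X * Xᴴ) + (trace (X * Yᴴ) + star (trace (X * Yᴴ))) + trace (Y * Yᴴ) := by
  rw [← trace_conjTranspose, conjTranspose_mul, conjTranspose_conjTranspose, conjTranspose_add,
    Matrix.add_mul, Matrix.mul_add, Matrix.mul_add, trace_add, trace_add, trace_add]
  abel

theorem conjTranspose_map_ofReal (X : Matrix m n ℝ) : (X.map ofReal)ᴴ = (X.map ofReal)ᵀ := by
  ext i j
  simp

theorem conj_trace_of_map_conj_eq [Fintype n] {M : Matrix n n ℂ} (hM : M.map conj = M) :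
    conj (trace M) = trace M := by
  conv_rhs => rw [← hM]
  simp [trace, map_sum]

theorem intervalIntegral_trace_mul_mul [Fintype l] [Fintype m] [Fintype n]
    {f : ℝ → Matrix m n ℂ} (hf : Continuous f) (L : Matrix l m ℂ) (R : Matrix n l ℂ)
    (a b : ℝ) :
    ∫ ν in a..b, trace (L * f ν * R) =
      trace (L * (of fun i j => ∫ ν in a..b, f ν i j) * R) := by
  have hsum : ∀ F : Matrix m n ℂ, trace (L * F * R) = ∑ i, ∑ j, F i j * (R * L) j i := by
    intro F
    rw [Matrix.mul_assoc, trace_mul_comm, Matrix.mul_assoc]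
    simp only [trace, diag, mul_apply]
  have hcont : ∀ i j, Continuous fun ν => f ν i j * (R * L) j i :=
    fun i j => (hf.matrix_elem i j).mul continuous_const
  simp only [hsum, of_apply]
  rw [intervalIntegral.integral_finsetSum fun i _ =>
    (continuous_finsetSum _ fun j _ => hcont i j).intervalIntegrable a b]
  simp only [intervalIntegral.integral_finsetSum fun j _ => (hcont _ j).intervalIntegrable a b,
    intervalIntegral.integral_mul_const]

end Matrix

section Resolvent

variable {n : ℕ} (A : Matrix (Fin n) (Fin n) ℝ) (Ω : ℝ)

theorem continuous_resolventIm
    (hA : ∀ ν : ℝ, (ν * I : ℂ) ∉ spectrum ℂ (A.map ofReal)) :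
    Continuous (resolventIm A) := by
  have hpencil : Continuous fun ν : ℝ =>
      ((ν : ℂ) * I) • (1 : Matrix (Fin n) (Fin n) ℂ) - A.map ofReal := by
    fun_prop
  refine continuous_iff_continuousAt.2 fun ν => ?_
  refine (continuousAt_matrix_inv _ ?_).comp hpencil.continuousAt
  rw [Ring.inverse_eq_inv']
  exact continuousAt_inv₀ (Matrix.isUnit_det_smul_one_sub_of_notMem_spectrum (hA ν)).ne_zero

theorem conj_resolventIm (ν : ℝ) (i k : Fin n) :
    conj (resolventIm A ν i k) = resolventIm A (-ν) i k := by
  have h : (resolventIm A ν)ᴴᵀ = resolventIm A (-ν) := by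
    rw [resolventIm, Matrix.conjTranspose_nonsing_inv, Matrix.transpose_nonsing_inv, resolventIm]
    congr 1
    ext a b
    by_cases hab : a = b <;> simp [hab, eq_comm]
  simpa using congr_fun₂ h i k

noncomputable def resolventIntegral : Matrix (Fin n) (Fin n) ℂ :=
  Matrix.of fun i k => ∫ ν in (-Ω)..Ω, resolventIm A ν i k

theorem conj_resolventIntegral (i k : Fin n) :
    conj (resolventIntegral A Ω i k) = resolventIntegral A Ω i k := by
  simp only [resolventIntegral, Matrix.of_apply, ← intervalIntegral.intervalIntegral_conj,
    conj_resolventIm]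
  rw [intervalIntegral.integral_comp_neg fun ν => resolventIm A ν i k, neg_neg]

theorem matLog_cayley_eq_smul_resolventIntegral
    (hA : ∀ ν : ℝ, (ν * I : ℂ) ∉ spectrum ℂ (A.map ofReal)) (hΩ : Ω ≠ 0) :
    matLog ((A.map ofReal + ((Ω : ℂ) * I) • 1) * (A.map ofReal - ((Ω : ℂ) * I) • 1)⁻¹) =
      (-I) • resolventIntegral A Ω := by
  have hM : IsUnit (A.map ofReal - ((Ω : ℂ) * I) • 1).det := by
    rw [← neg_sub, Matrix.det_neg]
    exact (isUnit_one.neg.pow _).mul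
      (Matrix.isUnit_det_smul_one_sub_of_notMem_spectrum (hA Ω))
  have hres : ∀ s : ℝ, (((1 - 2 * (s : ℂ)) * (Ω * I)) • 1 - A.map ofReal)⁻¹ =
      resolventIm A (Ω - 2 * Ω * s) := by
    intro s
    rw [resolventIm]
    push_cast
    ring_nf
  ext i k
  simp only [matLog, resolventIntegral, Matrix.of_apply, Matrix.smul_apply, smul_eq_mul,
    Matrix.cayley_sub_one_mul_inv _ _ _ hM, hres, intervalIntegral.integral_const_mul]
  rw [intervalIntegral.integral_comp_sub_mul (fun ν => resolventIm A ν i k)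
    (mul_ne_zero two_ne_zero hΩ)]
  rw [show Ω - 2 * Ω * 1 = -Ω by ring, show Ω - 2 * Ω * 0 = Ω by ring, real_smul]
  push_cast
  field_simp [ofReal_ne_zero.2 hΩ]

theorem map_ofReal_SomegaRe
    (hA : ∀ ν : ℝ, (ν * I : ℂ) ∉ spectrum ℂ (A.map ofReal)) (hΩ : Ω ≠ 0) :
    (SomegaRe A Ω).map ofReal = ((1 / (2 * Real.pi) : ℝ) : ℂ) • resolventIntegral A Ω := by
  ext i k
  have hscalar : I / ((2 * Real.pi : ℝ) : ℂ) * (-I * resolventIntegral A Ω i k) =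
      ((1 / (2 * Real.pi) : ℝ) : ℂ) * resolventIntegral A Ω i k := by
    push_cast
    field_simp
    rw [I_sq]
    ring
  simp only [SomegaRe, matLog_cayley_eq_smul_resolventIntegral A Ω hA hΩ, Matrix.map_apply,
    Matrix.smul_apply, smul_eq_mul, hscalar]
  refine conj_eq_iff_re.1 ?_
  rw [map_mul, conj_ofReal, conj_resolventIntegral]

theorem intervalIntegral_trace_tfEval_mul_conjTranspose {m p : ℕ}
    (hA : ∀ ν : ℝ, (ν * I : ℂ) ∉ spectrum ℂ (A.map ofReal)) (B : Matrix (Fin n) (Fin m) ℝ)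
    (C : Matrix (Fin p) (Fin n) ℝ) (D : Matrix (Fin p) (Fin m) ℝ) :
    ∫ ν in (-Ω)..Ω, trace (tfEval A B C D ν * (tfEval A B C D ν)ᴴ) =
      trace (C.map ofReal *
          (Matrix.of fun i k => ∫ ν in (-Ω)..Ω,
            (resolventIm A ν * B.map ofReal * (B.map ofReal)ᴴ * (resolventIm A ν)ᴴ) i k) *
          (C.map ofReal)ᵀ) +
        2 * trace (C.map ofReal * resolventIntegral A Ω * (B.map ofReal * (D.map ofReal)ᵀ)) +
        ((2 * Ω : ℝ) : ℂ) * trace (D.map ofReal * (D.map ofReal)ᵀ) := by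
  set Bc := B.map ofReal
  set Cc := C.map ofReal
  set Dc := D.map ofReal
  have hR := continuous_resolventIm A hA
  have hG : Continuous fun ν => resolventIm A ν * Bc * Bcᴴ * (resolventIm A ν)ᴴ := by
    fun_prop
  have hpoint : ∀ ν, trace (tfEval A B C D ν * (tfEval A B C D ν)ᴴ) =
      trace (Cc * (resolventIm A ν * Bc * Bcᴴ * (resolventIm A ν)ᴴ) * Ccᵀ) +
        (trace (Cc * resolventIm A ν * (Bc * Dcᵀ)) +
          conj (trace (Cc * resolventIm A ν * (Bc * Dcᵀ)))) +
        trace (Dc * Dcᵀ) := by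
    intro ν
    rw [tfEval, Matrix.trace_add_mul_conjTranspose_add]
    simp only [Matrix.conjTranspose_mul, Matrix.conjTranspose_map_ofReal, Matrix.mul_assoc,
      Complex.star_def, Bc, Cc, Dc]
  have hreal : conj (trace (Cc * resolventIntegral A Ω * (Bc * Dcᵀ))) =
      trace (Cc * resolventIntegral A Ω * (Bc * Dcᵀ)) := by
    refine Matrix.conj_trace_of_map_conj_eq ?_
    have hK : (resolventIntegral A Ω).map conj = resolventIntegral A Ω := by
      ext i k
      exact conj_resolventIntegral A Ω i k
    simp [Matrix.map_mul, hK, Bc, Cc, Dc, Matrix.transpose_map, Function.comp_def]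
  simp only [hpoint]
  rw [intervalIntegral.integral_add, intervalIntegral.integral_add, intervalIntegral.integral_add,
    intervalIntegral.intervalIntegral_conj, Matrix.intervalIntegral_trace_mul_mul hG,
    Matrix.intervalIntegral_trace_mul_mul hR, intervalIntegral.integral_const]
  · have hK : (Matrix.of fun i k => ∫ ν in (-Ω)..Ω, resolventIm A ν i k) =
        resolventIntegral A Ω := rfl
    rw [hK, hreal, real_smul]
    push_cast
    ring
  all_goals exact Continuous.intervalIntegrable (by fun_prop) _ _

end Resolvent

theorem stmt10 {n m p : ℕ} (A : Matrix (Fin n) (Fin n) ℝ) (B : Matrix (Fin n) (Fin m) ℝ)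
    (C : Matrix (Fin p) (Fin n) ℝ) (D : Matrix (Fin p) (Fin m) ℝ)
    (Ω : ℝ) (hΩ : 0 < Ω)
    (hA : ∀ μ ∈ spectrum ℂ (A.map Complex.ofReal), μ.re < 0) :
    ((1 / (2 * Real.pi) : ℝ) : ℂ) *
      (∫ ν in (-Ω)..Ω, Matrix.trace (tfEval A B C D ν * (tfEval A B C D ν)ᴴ)) =
    Matrix.trace
      (C.map Complex.ofReal * flGram A B Ω * (C.map Complex.ofReal)ᵀ +
        (2 : ℂ) •
          ((C.map Complex.ofReal * ((SomegaRe A Ω).map Complex.ofReal) * B.map Complex.ofReal +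
              ((Ω / (2 * Real.pi) : ℝ) : ℂ) • D.map Complex.ofReal) *
            (D.map Complex.ofReal)ᵀ)) := by
  have hAxis : ∀ ν : ℝ, (ν * I : ℂ) ∉ spectrum ℂ (A.map ofReal) :=
    fun ν hν => (hA _ hν).ne (by simp)
  have hGram : flGram A B Ω = ((1 / (2 * Real.pi) : ℝ) : ℂ) • Matrix.of fun i k =>
      ∫ ν in (-Ω)..Ω,
        (resolventIm A ν * B.map ofReal * (B.map ofReal)ᴴ * (resolventIm A ν)ᴴ) i k := by
    rfl
  rw [intervalIntegral_trace_tfEval_mul_conjTranspose A Ω hAxis, hGram,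
    map_ofReal_SomegaRe A Ω hAxis hΩ.ne']
  simp only [Matrix.trace_add, Matrix.trace_smul, Matrix.mul_smul, Matrix.smul_mul,
    Matrix.add_mul, Matrix.mul_assoc, smul_eq_mul]
  push_cast
  ring
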